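/- For every integer k ≥ 1, the kernel of the differential D: C_{k−1}^{(k)} → C_{k−2}^{(k)} is a free abelian group of rank Σ_{j=0}^{k} (−1)^j · k!/j!; equivalently, its rank equals the number of derangements of [k]. (Since C_k^{(k)} = 0, this kernel is the top reduced homology group of the complex of injective words on [k].) -/

import Mathlib

noncomputable section

/-- The free associative `R`-algebra on noncommuting generators labelled by `Fin k`,
realized as the monoid algebra on the free monoid. -/
abbrev FA (R : Type) [CommRing R] (k : ℕ) : Type := MonoidAlgebra R (FreeMonoid (Fin k))

/-- A word in the letters `Fin k`, as an element of the free associative algebra. -/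
def wordElem (R : Type) [CommRing R] (k : ℕ) (w : List (Fin k)) : FA R k :=
  MonoidAlgebra.single (FreeMonoid.ofList w) 1

/-- `C_{n-1}^{(k)}`: the free `R`-submodule spanned by the injective words of length `n`. -/
def wordsLen (R : Type) [CommRing R] (k n : ℕ) : Submodule R (FA R k) :=
  Submodule.span R {x | ∃ w : List (Fin k), w.Nodup ∧ w.length = n ∧ x = wordElem R k w}

/-- Alternating sum of letter deletions of a single word. -/
def Dword (R : Type) [CommRing R] (k : ℕ) (w : List (Fin k)) : FA R k :=
  ∑ j : Fin w.length, ((-1 : R) ^ (j : ℕ)) • wordElem R k (w.eraseIdx (j : ℕ))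

/-- The differential `D`, extended linearly to the whole free algebra. -/
def Ddiff (R : Type) [CommRing R] (k : ℕ) : FA R k →ₗ[R] FA R k :=
  (Finsupp.lsum R fun w : FreeMonoid (Fin k) =>
    LinearMap.toSpanSingleton R (FA R k) (Dword R k (FreeMonoid.toList w)))
    ∘ₗ (MonoidAlgebra.coeffLinearEquiv R).toLinearMap

/-! For a letter `a`, let `h_a` prepend `a` to the words that do not contain `a`. Since
`D (a x) = x - a D x`, on injective words the chain map `1 - (D h_a + h_a D)` kills the words
without `a` and sends `u a v` to `u a v - (-1)^|u| a u v`, a combination of words with the same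
letters. Composing these maps over all `k` letters gives a chain map homotopic to the identity
which vanishes on words of length `< k`, so the complex of injective words is exact below the top
degree. The rank of the top kernel is therefore the alternating sum of the ranks `k!/(k-n)!` of
the chain groups, which is the number of derangements. -/

theorem List.subset_cons_eraseIdx {α : Type*} {a : α} {l : List α} {j : ℕ} (ha : a ∈ l)
    (ha' : a ∉ l.eraseIdx j) : l ⊆ a :: l.eraseIdx j := by
  intro b hb
  obtain ⟨i, hi, rfl⟩ := List.getElem_of_mem hb
  by_cases hij : i = j
  · subst hij
    obtain ⟨i', hi', rfl⟩ := List.getElem_of_mem ha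
    have : i' = i := by
      by_contra h
      exact ha' (List.mem_eraseIdx_iff_getElem.2 ⟨i', hi', h, rfl⟩)
    simp [this]
  · exact List.mem_cons_of_mem _ (List.mem_eraseIdx_iff_getElem.2 ⟨i, hi, hij, rfl⟩)

theorem List.setOf_nodup_length_eq_range_ofFn {α : Type*} (n : ℕ) :
    {l : List α | l.Nodup ∧ l.length = n} = Set.range fun f : Fin n ↪ α => List.ofFn f := by
  ext l
  constructor
  · rintro ⟨hnd, rfl⟩
    exact ⟨⟨l.get, List.nodup_iff_injective_get.1 hnd⟩, List.ofFn_get l⟩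
  · rintro ⟨f, rfl⟩
    exact ⟨List.nodup_ofFn.2 f.injective, List.length_ofFn⟩

theorem one_sub_homotopy_mul_one_sub_homotopy {A : Type*} [Ring A] {d : A} (hd : d * d = 0)
    (h₁ h₂ : A) :
    (1 - (d * h₁ + h₁ * d)) * (1 - (d * h₂ + h₂ * d)) =
      1 - (d * (h₁ + (1 - (d * h₁ + h₁ * d)) * h₂) + (h₁ + (1 - (d * h₁ + h₁ * d)) * h₂) * d) := by
  have hd' : ∀ x, d * (d * x) = 0 := fun x => by rw [← mul_assoc, hd, zero_mul]
  simp only [mul_add, add_mul, mul_sub, sub_mul, mul_one, one_mul, mul_assoc, hd', mul_zero]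
  abel

theorem Submodule.finrank_inf_ker_add_finrank_map {R M N : Type*} [CommRing R] [IsDomain R]
    [AddCommGroup M] [Module R M] [AddCommGroup N] [Module R N] (p : Submodule R M)
    [Module.Finite R p] (f : M →ₗ[R] N) :
    Module.finrank R ↥(p ⊓ LinearMap.ker f) + Module.finrank R ↥(p.map f) =
      Module.finrank R p := by
  have h := (LinearMap.ker (f.domRestrict p)).finrank_quotient_add_finrank
  rwa [LinearEquiv.finrank_eq (f.domRestrict p).quotKerEquivRange, LinearMap.range_domRestrict,
    LinearMap.ker_domRestrict, ← Submodule.finrank_map_subtype_eq, Submodule.map_comap_subtype,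
    add_comm] at h

theorem eq_sum_neg_one_pow_mul_of_add_eq {r a : ℕ → ℤ} {N : ℕ} (h₀ : r 0 = a 0)
    (hsucc : ∀ n < N, r (n + 1) + r n = a (n + 1)) :
    r N = ∑ j ∈ Finset.range (N + 1), (-1) ^ j * a (N - j) := by
  induction N with
  | zero => simpa using h₀
  | succ N ih =>
    have hN := ih fun n hn => hsucc n (by omega)
    rw [Finset.sum_range_succ']
    simp only [Nat.add_sub_add_right, pow_succ, mul_neg_one, neg_mul, Finset.sum_neg_distrib, ← hN,
      pow_zero, one_mul, Nat.sub_zero]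
    linarith [hsucc N (by omega)]

section Words

variable {R : Type} [CommRing R] {k : ℕ}

def wordBasis (R : Type) [CommRing R] (k : ℕ) : Module.Basis (List (Fin k)) R (FA R k) :=
  (MonoidAlgebra.basis (FreeMonoid (Fin k)) R).reindex FreeMonoid.toList

@[simp]
lemma wordBasis_apply (l : List (Fin k)) : wordBasis R k l = wordElem R k l := by
  simp [wordBasis, wordElem]

lemma wordElem_cons (a : Fin k) (l : List (Fin k)) :
    wordElem R k (a :: l) = wordElem R k [a] * wordElem R k l := by
  simp [wordElem, MonoidAlgebra.single_mul_single, FreeMonoid.ofList_cons]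

lemma Ddiff_wordElem (l : List (Fin k)) : Ddiff R k (wordElem R k l) = Dword R k l := by
  simp [Ddiff, wordElem]

lemma Dword_cons (a : Fin k) (l : List (Fin k)) :
    Dword R k (a :: l) = wordElem R k l - wordElem R k [a] * Dword R k l := by
  simp [Dword, Fin.sum_univ_succ, pow_succ, Finset.mul_sum, sub_eq_add_neg]
  exact Finset.sum_congr rfl fun j _ => by rw [wordElem_cons]

lemma Ddiff_wordElem_singleton_mul (a : Fin k) (x : FA R k) :
    Ddiff R k (wordElem R k [a] * x) = x - wordElem R k [a] * Ddiff R k x := by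
  have : Ddiff R k ∘ₗ LinearMap.mulLeft R (wordElem R k [a]) =
      LinearMap.id - LinearMap.mulLeft R (wordElem R k [a]) ∘ₗ Ddiff R k := by
    refine (wordBasis R k).ext fun l => ?_
    simp [← wordElem_cons, Ddiff_wordElem, Dword_cons]
  exact LinearMap.congr_fun this x

lemma Ddiff_mul_Ddiff : Ddiff R k * Ddiff R k = 0 := by
  refine (wordBasis R k).ext fun l => ?_
  induction l with
  | nil => simp [Ddiff_wordElem, Dword]
  | cons a l ih =>
    simp only [wordBasis_apply, Module.End.mul_apply, LinearMap.zero_apply] at ih ⊢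
    rw [wordElem_cons, Ddiff_wordElem_singleton_mul, map_sub, Ddiff_wordElem_singleton_mul, ih]
    simp

def wordSpan (R : Type) [CommRing R] (k : ℕ) (s : Set (List (Fin k))) : Submodule R (FA R k) :=
  Submodule.span R (wordElem R k '' s)

lemma wordSpan_le {s : Set (List (Fin k))} {p : Submodule R (FA R k)} :
    wordSpan R k s ≤ p ↔ ∀ l ∈ s, wordElem R k l ∈ p := by
  rw [wordSpan, Submodule.span_le, Set.image_subset_iff]
  rfl

lemma wordElem_mem_wordSpan {s : Set (List (Fin k))} {l : List (Fin k)} (hl : l ∈ s) :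
    wordElem R k l ∈ wordSpan R k s :=
  Submodule.subset_span (Set.mem_image_of_mem _ hl)

lemma wordSpan_mono {s t : Set (List (Fin k))} (h : s ⊆ t) : wordSpan R k s ≤ wordSpan R k t :=
  Submodule.span_mono (Set.image_mono h)

lemma Dword_mem_wordSpan {s : Set (List (Fin k))} {l : List (Fin k)}
    (h : ∀ j < l.length, l.eraseIdx j ∈ s) : Dword R k l ∈ wordSpan R k s :=
  Submodule.sum_mem _ fun j _ => Submodule.smul_mem _ _ (wordElem_mem_wordSpan (h j j.2))

lemma wordsLen_eq_wordSpan (n : ℕ) :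
    wordsLen R k n = wordSpan R k {l | l.Nodup ∧ l.length = n} := by
  rw [wordsLen, wordSpan]
  congr 1
  ext x
  simp only [Set.mem_image]
  exact exists_congr fun l =>
    ⟨fun ⟨hnd, hlen, hx⟩ => ⟨⟨hnd, hlen⟩, hx.symm⟩, fun ⟨⟨hnd, hlen⟩, hx⟩ => ⟨hnd, hlen, hx.symm⟩⟩

lemma wordsLen_succ_le_comap_Ddiff (n : ℕ) :
    wordsLen R k (n + 1) ≤ (wordsLen R k n).comap (Ddiff R k) := by
  rw [wordsLen_eq_wordSpan, wordsLen_eq_wordSpan, wordSpan_le]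
  rintro l ⟨hnd, hlen⟩
  rw [Submodule.mem_comap, Ddiff_wordElem]
  exact Dword_mem_wordSpan fun j hj =>
    ⟨hnd.eraseIdx j, by rw [List.length_eraseIdx_of_lt hj, hlen]; rfl⟩

lemma wordsLen_zero_le_ker : wordsLen R k 0 ≤ LinearMap.ker (Ddiff R k) := by
  rw [wordsLen_eq_wordSpan, wordSpan_le]
  rintro l ⟨-, hl⟩
  rw [List.length_eq_zero_iff.1 hl, LinearMap.mem_ker, Ddiff_wordElem]
  simp [Dword]

end Words

section Exactness

variable {R : Type} [CommRing R] {k : ℕ}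

def prependIfAbsent (R : Type) [CommRing R] {k : ℕ} (a : Fin k) : Module.End R (FA R k) :=
  (wordBasis R k).constr R fun l => if a ∈ l then 0 else wordElem R k (a :: l)

lemma prependIfAbsent_wordElem (a : Fin k) (l : List (Fin k)) :
    prependIfAbsent R a (wordElem R k l) = if a ∈ l then 0 else wordElem R k (a :: l) := by
  rw [← wordBasis_apply, prependIfAbsent, Module.Basis.constr_basis]

lemma prependIfAbsent_eq_wordElem_singleton_mul {a : Fin k} {x : FA R k}
    (hx : x ∈ wordSpan R k {l | a ∉ l}) :
    prependIfAbsent R a x = wordElem R k [a] * x := by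
  refine LinearMap.eqOn_span (f := prependIfAbsent R a)
    (g := LinearMap.mulLeft R (wordElem R k [a])) ?_ hx
  rintro _ ⟨l, hl, rfl⟩
  rw [LinearMap.mulLeft_apply, prependIfAbsent_wordElem, if_neg hl, wordElem_cons]

lemma wordsLen_le_comap_prependIfAbsent (a : Fin k) (n : ℕ) :
    wordsLen R k n ≤ (wordsLen R k (n + 1)).comap (prependIfAbsent R a) := by
  rw [wordsLen_eq_wordSpan, wordsLen_eq_wordSpan, wordSpan_le]
  rintro l ⟨hnd, hlen⟩
  rw [Submodule.mem_comap, prependIfAbsent_wordElem]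
  split_ifs with ha
  · exact zero_mem _
  · exact wordElem_mem_wordSpan ⟨List.nodup_cons.2 ⟨ha, hnd⟩, by simp [hlen]⟩

lemma one_sub_homotopy_prependIfAbsent_wordElem_mem (a : Fin k) {L l : List (Fin k)} {n : ℕ}
    (hnd : l.Nodup) (hlen : l.length = n) (hL : L ⊆ l) :
    (1 - (Ddiff R k * prependIfAbsent R a + prependIfAbsent R a * Ddiff R k)) (wordElem R k l) ∈
      wordSpan R k {l' | l'.Nodup ∧ l'.length = n ∧ a :: L ⊆ l'} := by
  simp only [LinearMap.sub_apply, LinearMap.add_apply, Module.End.mul_apply, Module.End.one_apply,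
    prependIfAbsent_wordElem, Ddiff_wordElem]
  by_cases ha : a ∈ l
  · refine Submodule.sub_mem _ (wordElem_mem_wordSpan ⟨hnd, hlen, List.cons_subset.2 ⟨ha, hL⟩⟩) ?_
    have hD : Dword R k l ∈ wordSpan R k {l' | ∃ j < l.length, l' = l.eraseIdx j} :=
      Dword_mem_wordSpan fun j hj => ⟨j, hj, rfl⟩
    simp only [ha, if_true, map_zero, zero_add]
    refine (wordSpan_le (p := (wordSpan R k _).comap (prependIfAbsent R a))).2 ?_ hD
    rintro _ ⟨j, hj, rfl⟩
    rw [Submodule.mem_comap, prependIfAbsent_wordElem]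
    split_ifs with ha'
    · exact zero_mem _
    · refine wordElem_mem_wordSpan ⟨List.nodup_cons.2 ⟨ha', hnd.eraseIdx j⟩, ?_, ?_⟩
      · simp [List.length_eraseIdx_of_lt hj, ← hlen]; omega
      · exact List.cons_subset.2
          ⟨List.mem_cons_self, List.Subset.trans hL (List.subset_cons_eraseIdx ha ha')⟩
  · have hD : Dword R k l ∈ wordSpan R k {l' | a ∉ l'} :=
      Dword_mem_wordSpan fun j _ h => ha ((List.eraseIdx_sublist l j).subset h)
    rw [if_neg ha, wordElem_cons, Ddiff_wordElem_singleton_mul, Ddiff_wordElem,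
      prependIfAbsent_eq_wordElem_singleton_mul hD, sub_add_cancel, sub_self]
    exact zero_mem _

/-- A homotopy from `1` to the product over `a ∈ L` of the chain maps `1 - (D h_a + h_a D)`. -/
def prependHomotopy (R : Type) [CommRing R] {k : ℕ} : List (Fin k) → Module.End R (FA R k)
  | [] => 0
  | a :: L => prependIfAbsent R a +
      (1 - (Ddiff R k * prependIfAbsent R a + prependIfAbsent R a * Ddiff R k)) *
        prependHomotopy R L

lemma wordsLen_le_comap_prependHomotopy (L : List (Fin k)) (n : ℕ) :
    wordsLen R k n ≤ (wordsLen R k (n + 1)).comap (prependHomotopy R L) := by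
  induction L generalizing n with
  | nil => simp [prependHomotopy]
  | cons a L ih =>
    intro x hx
    have hΦ : ∀ m, wordsLen R k m ≤ (wordsLen R k m).comap
        (1 - (Ddiff R k * prependIfAbsent R a + prependIfAbsent R a * Ddiff R k)) := by
      intro m
      rw [wordsLen_eq_wordSpan, wordSpan_le]
      rintro l ⟨hnd, hlen⟩
      have hsub : {l' : List (Fin k) | l'.Nodup ∧ l'.length = m ∧ [a] ⊆ l'} ⊆
          {l' | l'.Nodup ∧ l'.length = m} := fun l' hl' => ⟨hl'.1, hl'.2.1⟩
      exact wordSpan_mono hsub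
        (one_sub_homotopy_prependIfAbsent_wordElem_mem a hnd hlen (List.nil_subset _))
    rw [Submodule.mem_comap, prependHomotopy, LinearMap.add_apply, Module.End.mul_apply]
    exact add_mem (wordsLen_le_comap_prependIfAbsent a n hx) (hΦ (n + 1) (ih n hx))

lemma wordsLen_le_comap_one_sub_prependHomotopy (L : List (Fin k)) (n : ℕ) :
    wordsLen R k n ≤ (wordSpan R k {l | l.Nodup ∧ l.length = n ∧ L ⊆ l}).comap
      (1 - (Ddiff R k * prependHomotopy R L + prependHomotopy R L * Ddiff R k)) := by
  induction L with
  | nil =>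
    rw [wordsLen_eq_wordSpan]
    simp only [prependHomotopy, mul_zero, zero_mul, add_zero, sub_zero, Module.End.one_eq_id,
      Submodule.comap_id]
    exact wordSpan_mono fun l (hl : l.Nodup ∧ l.length = n) => ⟨hl.1, hl.2, List.nil_subset _⟩
  | cons a L ih =>
    intro x hx
    rw [Submodule.mem_comap, prependHomotopy,
      ← one_sub_homotopy_mul_one_sub_homotopy Ddiff_mul_Ddiff, Module.End.mul_apply]
    have hΦ : wordSpan R k {l | l.Nodup ∧ l.length = n ∧ L ⊆ l} ≤
        (wordSpan R k {l | l.Nodup ∧ l.length = n ∧ a :: L ⊆ l}).comap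
          (1 - (Ddiff R k * prependIfAbsent R a + prependIfAbsent R a * Ddiff R k)) := by
      rw [wordSpan_le]
      rintro l ⟨hnd, hlen, hL⟩
      exact one_sub_homotopy_prependIfAbsent_wordElem_mem a hnd hlen hL
    exact Submodule.mem_comap.1 (hΦ (Submodule.mem_comap.1 (ih hx)))

theorem map_Ddiff_wordsLen_succ {n : ℕ} (hn : n < k) :
    (wordsLen R k (n + 1)).map (Ddiff R k) = wordsLen R k n ⊓ LinearMap.ker (Ddiff R k) := by
  refine le_antisymm (Submodule.map_le_iff_le_comap.2 fun x hx => ⟨?_, ?_⟩) ?_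
  · exact wordsLen_succ_le_comap_Ddiff n hx
  · rw [SetLike.mem_coe, LinearMap.mem_ker, ← Module.End.mul_apply, Ddiff_mul_Ddiff,
      LinearMap.zero_apply]
  rintro z ⟨hz, hDz⟩
  have hwords : {l : List (Fin k) | l.Nodup ∧ l.length = n ∧ List.finRange k ⊆ l} = ∅ := by
    refine Set.eq_empty_of_forall_notMem fun l ⟨_, hlen, hsub⟩ => ?_
    have := (List.nodup_finRange k).length_le_of_subset hsub
    simp only [List.length_finRange] at this
    omega
  have hΨ := wordsLen_le_comap_one_sub_prependHomotopy (R := R) (List.finRange k) n hz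
  rw [hwords, wordSpan, Set.image_empty, Submodule.span_empty, Submodule.mem_comap,
    Submodule.mem_bot] at hΨ
  rw [SetLike.mem_coe, LinearMap.mem_ker] at hDz
  simp only [LinearMap.sub_apply, LinearMap.add_apply, Module.End.mul_apply, Module.End.one_apply,
    hDz, map_zero, add_zero] at hΨ
  exact ⟨_, wordsLen_le_comap_prependHomotopy _ n hz, (sub_eq_zero.1 hΨ).symm⟩

end Exactness

section Rank

variable {R : Type} [CommRing R] {k : ℕ}

lemma wordsLen_eq_span_range (n : ℕ) :
    wordsLen R k n =
      Submodule.span R (Set.range fun f : Fin n ↪ Fin k => wordElem R k (List.ofFn f)) := by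
  rw [wordsLen_eq_wordSpan, wordSpan, List.setOf_nodup_length_eq_range_ofFn, ← Set.range_comp]
  rfl

instance (n : ℕ) : Module.Finite R (wordsLen R k n) := by
  rw [wordsLen_eq_span_range]
  exact Module.Finite.span_of_finite R (Set.finite_range _)

instance [IsNoetherianRing R] (n : ℕ) (p : Submodule R (FA R k)) :
    Module.Finite R ↥(wordsLen R k n ⊓ p) :=
  Module.Finite.of_injective _ (Submodule.inclusion_injective inf_le_left)

lemma finrank_wordsLen [Nontrivial R] (n : ℕ) :
    Module.finrank R (wordsLen R k n) = k.descFactorial n := by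
  rw [wordsLen_eq_span_range, finrank_span_eq_card, Fintype.card_embedding_eq, Fintype.card_fin,
    Fintype.card_fin]
  have := (wordBasis R k).linearIndependent.comp _
    (List.ofFn_injective.comp (DFunLike.coe_injective (F := Fin n ↪ Fin k)))
  simp only [Function.comp_def, wordBasis_apply] at this
  exact this

lemma finrank_top_homology :
    (Module.finrank ℤ ↥(wordsLen ℤ k k ⊓ LinearMap.ker (Ddiff ℤ k)) : ℤ) =
      ∑ j ∈ Finset.range (k + 1), (-1) ^ j * ((k.factorial / j.factorial : ℕ) : ℤ) := by
  rw [eq_sum_neg_one_pow_mul_of_add_eq (a := fun n => (k.descFactorial n : ℤ))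
    (r := fun n => Module.finrank ℤ ↥(wordsLen ℤ k n ⊓ LinearMap.ker (Ddiff ℤ k))) ?_ ?_]
  · refine Finset.sum_congr rfl fun j hj => ?_
    rw [Nat.descFactorial_eq_div (Nat.sub_le k j),
      Nat.sub_sub_self (Finset.mem_range_succ_iff.1 hj)]
  · rw [inf_eq_left.2 wordsLen_zero_le_ker, finrank_wordsLen]
  · intro n hn
    have h := Submodule.finrank_inf_ker_add_finrank_map (wordsLen ℤ k (n + 1)) (Ddiff ℤ k)
    rw [map_Ddiff_wordsLen_succ hn, finrank_wordsLen] at h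
    exact_mod_cast h

end Rank

theorem top_homology_rank_derangements_general (k : ℕ) :
    ∃ (d : ℕ) (_ : Module.Basis (Fin d) ℤ ↥(wordsLen ℤ k k ⊓ LinearMap.ker (Ddiff ℤ k))),
      (d : ℤ) = ∑ j ∈ Finset.range (k + 1),
          (-1 : ℤ) ^ j * ((Nat.factorial k / Nat.factorial j : ℕ) : ℤ) ∧
      d = Nat.card ↥(derangements (Fin k)) := by
  refine ⟨_, Module.finBasis ℤ _, finrank_top_homology, ?_⟩
  rw [Nat.card_eq_fintype_card, card_derangements_fin_eq_numDerangements, ← Nat.cast_inj (R := ℤ),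
    finrank_top_homology, numDerangements_sum]
  refine Finset.sum_congr rfl fun j hj => ?_
  rw [Nat.ascFactorial_eq_div, Nat.add_sub_cancel' (Finset.mem_range_succ_iff.1 hj)]

/-- The kernel of `D : C_{k-1}^{(k)} → C_{k-2}^{(k)}` (the top reduced homology of the
complex of injective words on `[k]`) is free abelian of rank `Σ_{j=0}^k (-1)^j k!/j!`,
which is the number of derangements of `[k]`. -/
theorem top_homology_rank_derangements (k : ℕ) (hk : 1 ≤ k) :
    ∃ (d : ℕ) (_ : Module.Basis (Fin d) ℤ ↥(wordsLen ℤ k k ⊓ LinearMap.ker (Ddiff ℤ k))),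
      (d : ℤ) = ∑ j ∈ Finset.range (k + 1),
          (-1 : ℤ) ^ j * ((Nat.factorial k / Nat.factorial j : ℕ) : ℤ) ∧
      d = Nat.card ↥(derangements (Fin k)) :=
  top_homology_rank_derangements_general k
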